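/- arXiv:2003.13844 — 3 statements merged into one kernel-verified Lean document; each statement's English description precedes it below -/
import Mathlib

section
/- Let X be an n×p real matrix, λ₂ > 0, Q_{λ₂} = I_n − X(XᵀX + nλ₂I_p)⁻¹Xᵀ and Σ̂ = n⁻¹XᵀX. Then for every p×m matrix L, ‖Q_{λ₂}^{1/2} X L‖_F² = n·λ₂·tr(Lᵀ Σ̂ (Σ̂ + λ₂I_p)⁻¹ L), where Q_{λ₂}^{1/2} is the positive semidefinite square root of Q_{λ₂}. -/
/-!
Since `S` is symmetric, `‖S X L‖_F² = tr(Lᵀ Xᵀ Q X L)`. Writing `A = XᵀX + nλ₂ I`, we have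
`Xᵀ Q X = XᵀX − XᵀX A⁻¹ XᵀX = XᵀX A⁻¹ (A − XᵀX) = nλ₂ XᵀX A⁻¹`, while `Σ̂ + λ₂ I = n⁻¹ A` gives
`Σ̂ (Σ̂ + λ₂ I)⁻¹ = XᵀX A⁻¹`.
-/

open Matrix

namespace Matrix

variable {m n : Type*} [Fintype m] [Fintype n] [DecidableEq n]

theorem transpose_mul_one_sub_mul_inv_mul_mul [DecidableEq m] {K : Type*} [Field K]
    (X : Matrix m n K) (c : K) (hA : IsUnit (Xᵀ * X + c • 1).det) :
    Xᵀ * (1 - X * (Xᵀ * X + c • 1)⁻¹ * Xᵀ) * X = c • (Xᵀ * X * (Xᵀ * X + c • 1)⁻¹) := by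
  set A := Xᵀ * X + c • (1 : Matrix n n K)
  calc Xᵀ * (1 - X * A⁻¹ * Xᵀ) * X = Xᵀ * X - Xᵀ * X * A⁻¹ * (Xᵀ * X) := by
        simp only [Matrix.mul_sub, Matrix.sub_mul, Matrix.mul_one, Matrix.mul_assoc]
    _ = Xᵀ * X * A⁻¹ * (A - Xᵀ * X) := by
        rw [Matrix.mul_sub, Matrix.mul_assoc _ A⁻¹ A, nonsing_inv_mul A hA, Matrix.mul_one]
    _ = c • (Xᵀ * X * A⁻¹) := by simp [A]

theorem inv_smul_of_ne_zero {K : Type*} [Field K] {A : Matrix n n K} {k : K} (hk : k ≠ 0)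
    (hA : IsUnit A.det) : (k • A)⁻¹ = k⁻¹ • A⁻¹ :=
  inv_smul' A (Units.mk0 k hk) hA

theorem isUnit_det_transpose_mul_self_add_smul_one (X : Matrix m n ℝ) {c : ℝ} (hc : 0 < c) :
    IsUnit (Xᵀ * X + c • 1).det :=
  (isUnit_iff_isUnit_det _).mp
    (PosDef.posSemidef_add (posSemidef_conjTranspose_mul_self X) (PosDef.one.smul hc)).isUnit

end Matrix

/-- `S` is `Q_{λ₂}^{1/2}`, and `‖M‖_F²` is written as `tr(MᵀM)`. -/
theorem stmt_2 (n p m : ℕ) (hn : 0 < n) (X : Matrix (Fin n) (Fin p) ℝ)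
    (l2 : ℝ) (hl2 : 0 < l2)
    (S : Matrix (Fin n) (Fin n) ℝ) (hS : S.PosSemidef)
    (hSS : S * S = (1 : Matrix (Fin n) (Fin n) ℝ)
        - X * (Xᵀ * X + ((n : ℝ) * l2) • (1 : Matrix (Fin p) (Fin p) ℝ))⁻¹ * Xᵀ)
    (L : Matrix (Fin p) (Fin m) ℝ) :
    ((S * X * L)ᵀ * (S * X * L)).trace
      = (n : ℝ) * l2 * (Lᵀ * ((n : ℝ)⁻¹ • (Xᵀ * X))
          * (((n : ℝ)⁻¹ • (Xᵀ * X)) + l2 • (1 : Matrix (Fin p) (Fin p) ℝ))⁻¹ * L).trace := by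
  have hn' : (n : ℝ) ≠ 0 := by positivity
  have hA := isUnit_det_transpose_mul_self_add_smul_one X (by positivity : 0 < (n : ℝ) * l2)
  have hgram : (S * X * L)ᵀ * (S * X * L) = Lᵀ * (Xᵀ * (S * S) * X) * L := by
    simp only [transpose_mul, show Sᵀ = S from hS.isHermitian.eq, Matrix.mul_assoc]
  have hscale : (n : ℝ)⁻¹ • (Xᵀ * X) + l2 • 1
      = (n : ℝ)⁻¹ • (Xᵀ * X + ((n : ℝ) * l2) • 1) := by
    rw [smul_add, smul_smul, inv_mul_cancel_left₀ hn']
  rw [hgram, hSS, transpose_mul_one_sub_mul_inv_mul_mul X _ hA, hscale,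
    inv_smul_of_ne_zero (inv_ne_zero hn') hA, inv_inv]
  simp [Matrix.mul_smul, Matrix.smul_mul, trace_smul, smul_smul, hn', Matrix.mul_assoc]
end

section
/- Let X ∈ ℝ^{n×p}, λ₂ > 0, Σ̂ = n⁻¹XᵀX with smallest nonzero eigenvalue σ_q, Q_{λ₂} = I_n − X(XᵀX+nλ₂I)⁻¹Xᵀ and M = n⁻¹XᵀQ_{λ₂}²X. Then M = λ₂²(Σ̂+λ₂I)⁻¹Σ̂(Σ̂+λ₂I)⁻¹, and max_{1≤j≤p} M_{jj} ≤ (λ₂/(σ_q + λ₂))² · max_{1≤j≤p} Σ̂_{jj}. -/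
/-!
With `B = XᵀX + nλ₂I = n(Σ̂ + λ₂I)`, the push-through identities `Q X = nλ₂ X B⁻¹` and
`Xᵀ Q = nλ₂ B⁻¹ Xᵀ` give `M = λ₂²(Σ̂+λ₂I)⁻¹Σ̂(Σ̂+λ₂I)⁻¹`, which is `f(Σ̂)` for
`f(x) = λ₂²x/(x+λ₂)²`. On the spectrum of `Σ̂` (zero or at least `σ_q`) we have
`f(x) ≤ (λ₂/(σ_q+λ₂))² x`, so by monotonicity of the functional calculus
`M ≤ (λ₂/(σ_q+λ₂))² Σ̂` in the Loewner order, and the diagonal entries inherit the bound.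
-/

open Matrix

section PushThrough

variable {m k R : Type*} [Fintype m] [Fintype k] [DecidableEq m] [DecidableEq k] [CommRing R]
  {X : Matrix m k R} {Y : Matrix k m R} {c : R}

theorem one_sub_mul_inv_mul_mul (h : IsUnit (Y * X + c • 1).det) :
    (1 - X * (Y * X + c • 1)⁻¹ * Y) * X = c • (X * (Y * X + c • 1)⁻¹) := by
  set B := Y * X + c • 1
  have hYX : Y * X = B - c • 1 := by simp [B]
  rw [Matrix.sub_mul, Matrix.one_mul, Matrix.mul_assoc, hYX, Matrix.mul_sub, Matrix.mul_assoc,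
    nonsing_inv_mul _ h]
  simp [Matrix.mul_smul]

theorem mul_one_sub_mul_inv_mul (h : IsUnit (Y * X + c • 1).det) :
    Y * (1 - X * (Y * X + c • 1)⁻¹ * Y) = c • ((Y * X + c • 1)⁻¹ * Y) := by
  set B := Y * X + c • 1
  have hYX : Y * X = B - c • 1 := by simp [B]
  rw [Matrix.mul_sub, Matrix.mul_one, ← Matrix.mul_assoc, ← Matrix.mul_assoc, hYX,
    Matrix.sub_mul, mul_nonsing_inv _ h]
  simp [Matrix.sub_mul, Matrix.smul_mul]

theorem mul_one_sub_mul_inv_mul_sq_mul (h : IsUnit (Y * X + c • 1).det) :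
    Y * ((1 - X * (Y * X + c • 1)⁻¹ * Y) * (1 - X * (Y * X + c • 1)⁻¹ * Y)) * X
      = c ^ 2 • ((Y * X + c • 1)⁻¹ * (Y * X) * (Y * X + c • 1)⁻¹) := by
  rw [← Matrix.mul_assoc, mul_one_sub_mul_inv_mul h, Matrix.mul_assoc,
    one_sub_mul_inv_mul_mul h]
  simp only [Matrix.smul_mul, Matrix.mul_smul, smul_smul, Matrix.mul_assoc, sq]

end PushThrough

theorem ridge_residual_gram_eq {m k K : Type*} [Fintype m] [Fintype k] [DecidableEq m]
    [DecidableEq k] [Field K] (X : Matrix m k K) {t : K} (l : K) (ht : t ≠ 0)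
    (h : IsUnit (t⁻¹ • (Xᵀ * X) + l • 1).det) :
    t⁻¹ • (Xᵀ * ((1 - X * (Xᵀ * X + (t * l) • 1)⁻¹ * Xᵀ)
        * (1 - X * (Xᵀ * X + (t * l) • 1)⁻¹ * Xᵀ)) * X)
      = l ^ 2 • ((t⁻¹ • (Xᵀ * X) + l • 1)⁻¹ * (t⁻¹ • (Xᵀ * X)) * (t⁻¹ • (Xᵀ * X) + l • 1)⁻¹) := by
  have hB : Xᵀ * X + (t * l) • 1 = Units.mk0 t ht • (t⁻¹ • (Xᵀ * X) + l • 1) := by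
    simp [smul_add, smul_smul, ht]
  have hBinv : (Xᵀ * X + (t * l) • 1)⁻¹ = t⁻¹ • (t⁻¹ • (Xᵀ * X) + l • 1)⁻¹ := by
    rw [hB, inv_smul' _ _ h]; rfl
  have hBdet : IsUnit (Xᵀ * X + (t * l) • 1).det := by
    rw [hB, Units.smul_def, det_smul]
    exact ((Units.mk0 t ht).isUnit.pow _).mul h
  rw [mul_one_sub_mul_inv_mul_sq_mul hBdet, hBinv]
  simp only [Matrix.smul_mul, Matrix.mul_smul, smul_smul]
  congr 1
  field_simp

theorem ridge_weight_le {l σ x : ℝ} (hl : 0 < l) (hσ : 0 < σ) (hx : x = 0 ∨ σ ≤ x) :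
    l ^ 2 * x / (x + l) ^ 2 ≤ (l / (σ + l)) ^ 2 * x := by
  rcases hx with rfl | hσx
  · simp
  · have hx0 : 0 ≤ x := hσ.le.trans hσx
    rw [div_pow, div_mul_eq_mul_div]
    gcongr

open scoped ComplexOrder MatrixOrder in
theorem diag_le_diag_of_le {n 𝕜 : Type*} [RCLike 𝕜] {A B : Matrix n n 𝕜} (h : A ≤ B) (j : n) :
    A j j ≤ B j j :=
  sub_nonneg.mp (le_iff.mp h).diag_nonneg

section FunctionalCalculus

open scoped MatrixOrder

variable {n 𝕜 : Type*} [Fintype n] [DecidableEq n] [RCLike 𝕜] {S : Matrix n n 𝕜}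

theorem add_smul_one_eq_cfc (hS : IsSelfAdjoint S) (l : ℝ) :
    S + l • (1 : Matrix n n 𝕜) = cfc (fun x => x + l) S := by
  rw [cfc_add_const l _ S, cfc_id' ℝ S, Algebra.algebraMap_eq_smul_one]

theorem isUnit_add_smul_one (hS : IsSelfAdjoint S) {l : ℝ} (hl : ∀ x ∈ spectrum ℝ S, x + l ≠ 0) :
    IsUnit (S + l • (1 : Matrix n n 𝕜)) := by
  rw [add_smul_one_eq_cfc hS]
  exact isUnit_cfc_iff _ S |>.mpr hl

theorem add_smul_one_inv_eq_cfc (hS : IsSelfAdjoint S) {l : ℝ}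
    (hl : ∀ x ∈ spectrum ℝ S, x + l ≠ 0) :
    (S + l • (1 : Matrix n n 𝕜))⁻¹ = cfc (fun x => (x + l)⁻¹) S := by
  rw [cfc_inv _ S hl, ← add_smul_one_eq_cfc hS, nonsing_inv_eq_ringInverse]

theorem smul_resolvent_mul_mul_resolvent_eq_cfc (hS : IsSelfAdjoint S) {l : ℝ}
    (hl : ∀ x ∈ spectrum ℝ S, x + l ≠ 0) :
    l ^ 2 • ((S + l • (1 : Matrix n n 𝕜))⁻¹ * S * (S + l • 1)⁻¹)
      = cfc (fun x => l ^ 2 * x / (x + l) ^ 2) S := by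
  have hcont : ∀ f : ℝ → ℝ, ContinuousOn f (spectrum ℝ S) :=
    S.finite_real_spectrum.continuousOn
  rw [add_smul_one_inv_eq_cfc hS hl]
  conv_lhs => enter [2, 1, 2]; rw [← cfc_id' ℝ S]
  rw [← cfc_mul _ _ S (hcont _) (hcont _), ← cfc_mul _ _ S (hcont _) (hcont _),
    ← cfc_smul _ _ S (hcont _)]
  refine cfc_congr fun x hx => ?_
  simp only [smul_eq_mul]
  field_simp [hl x hx]

theorem cfc_ridge_weight_le (hS : IsSelfAdjoint S) {l σ : ℝ} (hl : 0 < l) (hσ : 0 < σ)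
    (hspec : ∀ x ∈ spectrum ℝ S, x = 0 ∨ σ ≤ x) :
    cfc (fun x => l ^ 2 * x / (x + l) ^ 2) S ≤ (l / (σ + l)) ^ 2 • S := by
  have hcont : ∀ f : ℝ → ℝ, ContinuousOn f (spectrum ℝ S) :=
    S.finite_real_spectrum.continuousOn
  rw [← cfc_const_mul_id _ S]
  exact cfc_mono (fun x hx => ridge_weight_le hl hσ (hspec x hx)) (hcont _) (hcont _)

end FunctionalCalculus

theorem stmt_7_general (n p : ℕ) (hn : 0 < n) (hp : 0 < p) (X : Matrix (Fin n) (Fin p) ℝ)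
    (l2 : ℝ) (hl2 : 0 < l2)
    (hherm : ((n : ℝ)⁻¹ • (Xᵀ * X)).IsHermitian)
    (σq : ℝ) (hσq : 0 < σq)
    (hlb : ∀ i, hherm.eigenvalues i ≠ 0 → σq ≤ hherm.eigenvalues i) :
    (n : ℝ)⁻¹ • (Xᵀ * (((1 : Matrix (Fin n) (Fin n) ℝ)
            - X * (Xᵀ * X + ((n : ℝ) * l2) • (1 : Matrix (Fin p) (Fin p) ℝ))⁻¹ * Xᵀ)
          * ((1 : Matrix (Fin n) (Fin n) ℝ)
            - X * (Xᵀ * X + ((n : ℝ) * l2) • (1 : Matrix (Fin p) (Fin p) ℝ))⁻¹ * Xᵀ)) * X)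
      = (l2 ^ 2) • ((((n : ℝ)⁻¹ • (Xᵀ * X)) + l2 • (1 : Matrix (Fin p) (Fin p) ℝ))⁻¹
          * ((n : ℝ)⁻¹ • (Xᵀ * X))
          * (((n : ℝ)⁻¹ • (Xᵀ * X)) + l2 • (1 : Matrix (Fin p) (Fin p) ℝ))⁻¹)
    ∧ Finset.univ.sup' (Finset.univ_nonempty_iff.mpr (Fin.pos_iff_nonempty.mp hp))
        (fun j => ((n : ℝ)⁻¹ • (Xᵀ * (((1 : Matrix (Fin n) (Fin n) ℝ)
              - X * (Xᵀ * X + ((n : ℝ) * l2) • (1 : Matrix (Fin p) (Fin p) ℝ))⁻¹ * Xᵀ)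
            * ((1 : Matrix (Fin n) (Fin n) ℝ)
              - X * (Xᵀ * X + ((n : ℝ) * l2) • (1 : Matrix (Fin p) (Fin p) ℝ))⁻¹ * Xᵀ)) * X)) j j)
      ≤ (l2 / (σq + l2)) ^ 2
        * Finset.univ.sup' (Finset.univ_nonempty_iff.mpr (Fin.pos_iff_nonempty.mp hp))
            (fun j => ((n : ℝ)⁻¹ • (Xᵀ * X)) j j) := by
  set S := (n : ℝ)⁻¹ • (Xᵀ * X)
  have hS : IsSelfAdjoint S := hherm
  have hspec : ∀ x ∈ spectrum ℝ S, x = 0 ∨ σq ≤ x := by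
    rw [hherm.spectrum_real_eq_range_eigenvalues]
    rintro _ ⟨i, rfl⟩
    exact or_iff_not_imp_left.mpr (hlb i)
  have hl : ∀ x ∈ spectrum ℝ S, x + l2 ≠ 0 := fun x hx => by
    rcases hspec x hx with rfl | h <;> linarith
  have hM := ridge_residual_gram_eq X l2 (Nat.cast_ne_zero.mpr hn.ne')
    ((isUnit_iff_isUnit_det _).mp (isUnit_add_smul_one hS hl))
  refine ⟨hM, Finset.sup'_le _ _ fun j _ => ?_⟩
  rw [hM, smul_resolvent_mul_mul_resolvent_eq_cfc hS hl]
  calc _ ≤ ((l2 / (σq + l2)) ^ 2 • S) j j :=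
        diag_le_diag_of_le (cfc_ridge_weight_le hS hl2 hσq hspec) j
    _ ≤ _ := by
        rw [Matrix.smul_apply, smul_eq_mul]
        gcongr
        exact Finset.le_sup' (fun j => S j j) (Finset.mem_univ j)

/-- With `Q_{λ₂} = I − X(XᵀX + nλ₂I)⁻¹Xᵀ`, `Σ̂ = n⁻¹XᵀX` and `M = n⁻¹XᵀQ_{λ₂}²X`:
`M = λ₂²(Σ̂+λ₂I)⁻¹Σ̂(Σ̂+λ₂I)⁻¹` and `max_j M_jj ≤ (λ₂/(σ_q+λ₂))² max_j Σ̂_jj`, where `σ_q`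
is the smallest nonzero eigenvalue of `Σ̂`. -/
theorem stmt_7 (n p : ℕ) (hn : 0 < n) (hp : 0 < p) (X : Matrix (Fin n) (Fin p) ℝ)
    (l2 : ℝ) (hl2 : 0 < l2)
    (hherm : ((n : ℝ)⁻¹ • (Xᵀ * X)).IsHermitian)
    (σq : ℝ) (hσq : 0 < σq)
    (hmem : ∃ i, hherm.eigenvalues i = σq)
    (hlb : ∀ i, hherm.eigenvalues i ≠ 0 → σq ≤ hherm.eigenvalues i) :
    (n : ℝ)⁻¹ • (Xᵀ * (((1 : Matrix (Fin n) (Fin n) ℝ)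
            - X * (Xᵀ * X + ((n : ℝ) * l2) • (1 : Matrix (Fin p) (Fin p) ℝ))⁻¹ * Xᵀ)
          * ((1 : Matrix (Fin n) (Fin n) ℝ)
            - X * (Xᵀ * X + ((n : ℝ) * l2) • (1 : Matrix (Fin p) (Fin p) ℝ))⁻¹ * Xᵀ)) * X)
      = (l2 ^ 2) • ((((n : ℝ)⁻¹ • (Xᵀ * X)) + l2 • (1 : Matrix (Fin p) (Fin p) ℝ))⁻¹
          * ((n : ℝ)⁻¹ • (Xᵀ * X))
          * (((n : ℝ)⁻¹ • (Xᵀ * X)) + l2 • (1 : Matrix (Fin p) (Fin p) ℝ))⁻¹)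
    ∧ Finset.univ.sup' (Finset.univ_nonempty_iff.mpr (Fin.pos_iff_nonempty.mp hp))
        (fun j => ((n : ℝ)⁻¹ • (Xᵀ * (((1 : Matrix (Fin n) (Fin n) ℝ)
              - X * (Xᵀ * X + ((n : ℝ) * l2) • (1 : Matrix (Fin p) (Fin p) ℝ))⁻¹ * Xᵀ)
            * ((1 : Matrix (Fin n) (Fin n) ℝ)
              - X * (Xᵀ * X + ((n : ℝ) * l2) • (1 : Matrix (Fin p) (Fin p) ℝ))⁻¹ * Xᵀ)) * X)) j j)
      ≤ (l2 / (σq + l2)) ^ 2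
        * Finset.univ.sup' (Finset.univ_nonempty_iff.mpr (Fin.pos_iff_nonempty.mp hp))
            (fun j => ((n : ℝ)⁻¹ • (Xᵀ * X)) j j) :=
  stmt_7_general n p hn hp X l2 hl2 hherm σq hσq hlb
end

section
/- Let B ∈ ℝ^{K×m} with rank K and suppose λ_K(m⁻¹BBᵀ) ≥ c' > 0 and all entries of B are bounded by c'' in absolute value. Let ψ ∈ ℝ^m satisfy ‖ψ‖₀ ≤ d (at most d nonzero coordinates) and ‖ψ‖_∞ ≤ c. Then with P_B = Bᵀ(BBᵀ)⁻¹B, (1/m)‖P_B ψ‖₂² ≤ (c c'')² d² K / (c' m²), and for every standard basis vector e_ℓ of ℝ^m, |e_ℓᵀ P_B ψ| ≤ c (c'')² K d / (c' m). -/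
/-!
Write `A = BBᵀ`, `w = Bψ` and `v = A⁻¹w`. Then `P_Bψ = Bᵀv` and `‖P_Bψ‖² = ⟪v, Av⟫ = ⟪v, w⟫`.
The eigenvalue bound says that `A` is coercive with constant `α = c'm`, i.e. `α‖v‖² ≤ ⟪v, w⟫`;
with Cauchy–Schwarz this gives `α⟪v, w⟫ ≤ ‖w‖²` and `α‖v‖ ≤ ‖w‖`. Each entry of `w` is a sum
of at most `d` nonzero terms of size `≤ c c''`, so `‖w‖² ≤ K (d c c'')²`, which yields the first
estimate. For the second, `|(Bᵀv)_ℓ| ≤ ‖B_{·ℓ}‖ ‖v‖ ≤ √K c'' · ‖w‖ / α`.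
-/

open Matrix

section DotProduct

variable {ι : Type*} [Fintype ι]

theorem sq_dotProduct_le (u v : ι → ℝ) : (u ⬝ᵥ v) ^ 2 ≤ (u ⬝ᵥ u) * (v ⬝ᵥ v) := by
  simpa only [dotProduct, sq] using Finset.sum_mul_sq_le_sq_mul_sq Finset.univ u v

theorem dotProduct_self_le_of_abs_le {w : ι → ℝ} {a : ℝ} (h : ∀ i, |w i| ≤ a) :
    w ⬝ᵥ w ≤ Fintype.card ι * a ^ 2 := by
  calc w ⬝ᵥ w = ∑ i, |w i| ^ 2 := by simp only [dotProduct, sq_abs, ← sq]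
    _ ≤ ∑ _i : ι, a ^ 2 := by gcongr with i; exact h i
    _ = Fintype.card ι * a ^ 2 := by simp

theorem abs_dotProduct_le_of_ncard_support_le {x ψ : ι → ℝ} {b c : ℝ} {d : ℕ}
    (hx : ∀ i, |x i| ≤ b) (hψ : ∀ i, |ψ i| ≤ c) (hsupp : (Function.support ψ).ncard ≤ d)
    (hb : 0 ≤ b) (hc : 0 ≤ c) : |x ⬝ᵥ ψ| ≤ d * (b * c) := by
  classical
  have hcard : ((Finset.univ.filter fun i => ψ i ≠ 0).card : ℝ) ≤ d := by
    rw [← Set.ncard_coe_finset, Finset.coe_filter_univ]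
    exact_mod_cast hsupp
  calc |x ⬝ᵥ ψ| ≤ ∑ i, |x i * ψ i| := Finset.abs_sum_le_sum_abs _ _
    _ = ∑ i ∈ Finset.univ.filter fun i => ψ i ≠ 0, |x i| * |ψ i| := by
        rw [Finset.sum_filter_of_ne fun i _ hi => ?_]
        · simp only [abs_mul]
        · intro h0; simp [h0] at hi
    _ ≤ ∑ _i ∈ Finset.univ.filter fun i => ψ i ≠ 0, b * c := by
        gcongr with i; exacts [hx i, hψ i]
    _ ≤ d * (b * c) := by
        rw [Finset.sum_const, nsmul_eq_mul]; gcongr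

theorem mul_dotProduct_le_of_coercive {v w : ι → ℝ} {α : ℝ} (hα : 0 < α)
    (h : α * (v ⬝ᵥ v) ≤ v ⬝ᵥ w) : α * (v ⬝ᵥ w) ≤ w ⬝ᵥ w := by
  have hvv : 0 ≤ v ⬝ᵥ v := dotProduct_star_self_nonneg _
  have hvw : 0 ≤ v ⬝ᵥ w := (mul_nonneg hα.le hvv).trans h
  have := sq_dotProduct_le v w
  rcases hvw.eq_or_lt with h0 | hpos
  · rw [← h0, mul_zero]; exact dotProduct_star_self_nonneg _
  · have hww : 0 ≤ w ⬝ᵥ w := dotProduct_star_self_nonneg _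
    refine le_of_mul_le_mul_right ?_ hpos
    nlinarith [mul_le_mul_of_nonneg_right h hww, mul_le_mul_of_nonneg_left this hα.le]

end DotProduct

section Projection

variable {ι κ : Type*} [Fintype ι] [Fintype κ]

theorem dotProduct_transpose_mulVec_self (B : Matrix ι κ ℝ) (v : ι → ℝ) :
    (Bᵀ *ᵥ v) ⬝ᵥ (Bᵀ *ᵥ v) = v ⬝ᵥ (B * Bᵀ) *ᵥ v := by
  rw [mulVec_transpose, ← mulVec_mulVec, dotProduct_mulVec, mulVec_transpose]

variable [DecidableEq ι]

theorem isUnit_det_of_coercive {A : Matrix ι ι ℝ} {α : ℝ} (hα : 0 < α)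
    (hA : ∀ v, α * (v ⬝ᵥ v) ≤ v ⬝ᵥ A *ᵥ v) : IsUnit A.det := by
  refine isUnit_iff_ne_zero.mpr fun hdet => ?_
  obtain ⟨v, hv, hAv⟩ := exists_mulVec_eq_zero_iff.mpr hdet
  have hvv : v ⬝ᵥ v ≤ 0 := by
    have := hA v
    rw [hAv, dotProduct_zero] at this
    exact nonpos_of_mul_nonpos_right this hα
  exact hv (dotProduct_self_eq_zero.mp
    (hvv.antisymm (dotProduct_star_self_nonneg _)))

theorem exists_projection_eq_transpose_mulVec {B : Matrix ι κ ℝ} (hB : IsUnit (B * Bᵀ).det)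
    (ψ : κ → ℝ) :
    ∃ v, (Bᵀ * (B * Bᵀ)⁻¹ * B) *ᵥ ψ = Bᵀ *ᵥ v ∧ (B * Bᵀ) *ᵥ v = B *ᵥ ψ :=
  ⟨(B * Bᵀ)⁻¹ *ᵥ B *ᵥ ψ, by simp only [mulVec_mulVec, Matrix.mul_assoc],
    by rw [mulVec_mulVec, mul_nonsing_inv _ hB, one_mulVec]⟩

variable {B : Matrix ι κ ℝ} {α : ℝ}

theorem mul_dotProduct_projection_le (hα : 0 < α)
    (hB : ∀ v, α * (v ⬝ᵥ v) ≤ v ⬝ᵥ (B * Bᵀ) *ᵥ v) (ψ : κ → ℝ) :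
    α * (((Bᵀ * (B * Bᵀ)⁻¹ * B) *ᵥ ψ) ⬝ᵥ ((Bᵀ * (B * Bᵀ)⁻¹ * B) *ᵥ ψ))
      ≤ (B *ᵥ ψ) ⬝ᵥ (B *ᵥ ψ) := by
  obtain ⟨v, hP, hBv⟩ := exists_projection_eq_transpose_mulVec (isUnit_det_of_coercive hα hB) ψ
  have hv : α * (v ⬝ᵥ v) ≤ v ⬝ᵥ B *ᵥ ψ := hBv ▸ hB v
  rw [hP, dotProduct_transpose_mulVec_self, hBv]
  exact mul_dotProduct_le_of_coercive hα hv

theorem sq_mul_sq_projection_apply_le (hα : 0 < α)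
    (hB : ∀ v, α * (v ⬝ᵥ v) ≤ v ⬝ᵥ (B * Bᵀ) *ᵥ v) (ψ : κ → ℝ) (ℓ : κ) :
    α ^ 2 * ((Bᵀ * (B * Bᵀ)⁻¹ * B) *ᵥ ψ) ℓ ^ 2 ≤ (Bᵀ ℓ ⬝ᵥ Bᵀ ℓ) * ((B *ᵥ ψ) ⬝ᵥ (B *ᵥ ψ)) := by
  obtain ⟨v, hP, hBv⟩ := exists_projection_eq_transpose_mulVec (isUnit_det_of_coercive hα hB) ψ
  have hv : α * (v ⬝ᵥ v) ≤ v ⬝ᵥ B *ᵥ ψ := hBv ▸ hB v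
  have hvw := mul_dotProduct_le_of_coercive hα hv
  have hcol : 0 ≤ Bᵀ ℓ ⬝ᵥ Bᵀ ℓ := dotProduct_star_self_nonneg _
  rw [hP]
  calc α ^ 2 * (Bᵀ ℓ ⬝ᵥ v) ^ 2 ≤ α ^ 2 * ((Bᵀ ℓ ⬝ᵥ Bᵀ ℓ) * (v ⬝ᵥ v)) := by
        gcongr; exact sq_dotProduct_le _ _
    _ = (Bᵀ ℓ ⬝ᵥ Bᵀ ℓ) * (α * (α * (v ⬝ᵥ v))) := by ring
    _ ≤ (Bᵀ ℓ ⬝ᵥ Bᵀ ℓ) * ((B *ᵥ ψ) ⬝ᵥ (B *ᵥ ψ)) := by gcongr; exact hvw.trans' (by gcongr)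

end Projection

theorem stmt_18_general {K m : ℕ} (hm : 0 < m)
    (B : Matrix (Fin K) (Fin m) ℝ)
    (c' c'' : ℝ) (hc' : 0 < c')
    (hlb : ∀ v : Fin K → ℝ, c' * (v ⬝ᵥ v) ≤ v ⬝ᵥ ((m : ℝ)⁻¹ • (B * Bᵀ)).mulVec v)
    (hBbd : ∀ k j, |B k j| ≤ c'')
    (ψ : Fin m → ℝ) (d : ℕ) (c : ℝ)
    (hsupp : {j : Fin m | ψ j ≠ 0}.ncard ≤ d) (hψ : ∀ j, |ψ j| ≤ c) :
    (m : ℝ)⁻¹ * (((Bᵀ * (B * Bᵀ)⁻¹ * B).mulVec ψ) ⬝ᵥ ((Bᵀ * (B * Bᵀ)⁻¹ * B).mulVec ψ))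
        ≤ (c * c'') ^ 2 * (d : ℝ) ^ 2 * (K : ℝ) / (c' * (m : ℝ) ^ 2)
    ∧ ∀ ℓ : Fin m, |((Bᵀ * (B * Bᵀ)⁻¹ * B).mulVec ψ) ℓ|
        ≤ c * c'' ^ 2 * (K : ℝ) * (d : ℝ) / (c' * (m : ℝ)) := by
  have hm' : (0 : ℝ) < m := by exact_mod_cast hm
  have hα : 0 < c' * m := by positivity
  have hcoer : ∀ v, c' * m * (v ⬝ᵥ v) ≤ v ⬝ᵥ (B * Bᵀ) *ᵥ v := fun v => by
    have := hlb v
    rw [smul_mulVec, dotProduct_smul, smul_eq_mul, le_inv_mul_iff₀ hm'] at this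
    linarith
  have hc : 0 ≤ c := (abs_nonneg _).trans (hψ ⟨0, hm⟩)
  have hw : (B *ᵥ ψ) ⬝ᵥ (B *ᵥ ψ) ≤ K * (d * (c'' * c)) ^ 2 :=
    (dotProduct_self_le_of_abs_le fun k => abs_dotProduct_le_of_ncard_support_le (hBbd k) hψ hsupp
      ((abs_nonneg _).trans (hBbd k ⟨0, hm⟩)) hc).trans_eq (by rw [Fintype.card_fin])
  set Pψ := (Bᵀ * (B * Bᵀ)⁻¹ * B) *ᵥ ψ
  constructor
  · rw [le_div_iff₀ (by positivity)]
    calc (m : ℝ)⁻¹ * (Pψ ⬝ᵥ Pψ) * (c' * m ^ 2) = c' * m * (Pψ ⬝ᵥ Pψ) := by field_simp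
      _ ≤ (B *ᵥ ψ) ⬝ᵥ (B *ᵥ ψ) := mul_dotProduct_projection_le hα hcoer ψ
      _ ≤ K * (d * (c'' * c)) ^ 2 := hw
      _ = (c * c'') ^ 2 * d ^ 2 * K := by ring
  · intro ℓ
    have hcol : Bᵀ ℓ ⬝ᵥ Bᵀ ℓ ≤ K * c'' ^ 2 :=
      (dotProduct_self_le_of_abs_le fun k => hBbd k ℓ).trans_eq (by rw [Fintype.card_fin])
    refine abs_le_of_sq_le_sq ?_ (by positivity)
    rw [div_pow, le_div_iff₀ (by positivity)]
    calc Pψ ℓ ^ 2 * (c' * m) ^ 2 = (c' * m) ^ 2 * Pψ ℓ ^ 2 := mul_comm _ _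
      _ ≤ (Bᵀ ℓ ⬝ᵥ Bᵀ ℓ) * ((B *ᵥ ψ) ⬝ᵥ (B *ᵥ ψ)) := sq_mul_sq_projection_apply_le hα hcoer ψ ℓ
      _ ≤ (K * c'' ^ 2) * (K * (d * (c'' * c)) ^ 2) :=
          mul_le_mul hcol hw (dotProduct_star_self_nonneg _) (by positivity)
      _ = (c * c'' ^ 2 * K * d) ^ 2 := by ring

/-- For `B ∈ ℝ^{K×m}` of rank `K` with `λ_K(m⁻¹BBᵀ) ≥ c' > 0` and `|B_{kj}| ≤ c''`, and
`ψ` with at most `d` nonzero entries, each bounded by `c`: with `P_B = Bᵀ(BBᵀ)⁻¹B`,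
`(1/m)‖P_Bψ‖₂² ≤ (cc'')²d²K/(c'm²)` and `|e_ℓᵀP_Bψ| ≤ c(c'')²Kd/(c'm)` for all `ℓ`. -/
theorem stmt_18 {K m : ℕ} (hm : 0 < m) (hK : 0 < K) (hKm : K < m)
    (B : Matrix (Fin K) (Fin m) ℝ) (hrank : B.rank = K)
    (c' c'' : ℝ) (hc' : 0 < c')
    (hlb : ∀ v : Fin K → ℝ, c' * (v ⬝ᵥ v) ≤ v ⬝ᵥ ((m : ℝ)⁻¹ • (B * Bᵀ)).mulVec v)
    (hBbd : ∀ k j, |B k j| ≤ c'')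
    (ψ : Fin m → ℝ) (d : ℕ) (c : ℝ)
    (hsupp : {j : Fin m | ψ j ≠ 0}.ncard ≤ d) (hψ : ∀ j, |ψ j| ≤ c) :
    (m : ℝ)⁻¹ * (((Bᵀ * (B * Bᵀ)⁻¹ * B).mulVec ψ) ⬝ᵥ ((Bᵀ * (B * Bᵀ)⁻¹ * B).mulVec ψ))
        ≤ (c * c'') ^ 2 * (d : ℝ) ^ 2 * (K : ℝ) / (c' * (m : ℝ) ^ 2)
    ∧ ∀ ℓ : Fin m, |((Bᵀ * (B * Bᵀ)⁻¹ * B).mulVec ψ) ℓ|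
        ≤ c * c'' ^ 2 * (K : ℝ) * (d : ℝ) / (c' * (m : ℝ)) :=
  stmt_18_general hm B c' c'' hc' hlb hBbd ψ d c hsupp hψ
end
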